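/- arXiv:2511.16176 — 4 statements merged into one kernel-verified Lean document; each statement's English description precedes it below -/
import Mathlib

section
/- Let p, q, r be integers with 2 ≤ p ≤ q ≤ r. If 5/6 < 1/p + 1/q + 1/r < 1, then exactly one of the following holds: (p,q) = (2,3) and r ≥ 7; (p,q) = (2,4) and 5 ≤ r ≤ 11; (p,q) = (2,5) and 5 ≤ r ≤ 7; (p,q) = (3,3) and 4 ≤ r ≤ 5. -/
lemma aux2 (n m : ℕ) (hm : 0 < m) (h : m ≤ n) : (1:ℚ)/n ≤ 1/m := by
  apply one_div_le_one_div_of_le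
  · exact_mod_cast hm
  · exact_mod_cast h

lemma aux1 (n m : ℕ) (hn : 0 < n) (h : (1:ℚ)/n < 1/m) : m < n := by
  by_contra hc
  push_neg at hc
  exact absurd h (not_lt.mpr (aux2 m n hn hc))

/-- Enumeration of hyperbolic triangle types `(p,q,r)` with
`5/6 < 1/p + 1/q + 1/r < 1`. -/
theorem stmt1 (p q r : ℕ) (hp : 2 ≤ p) (hpq : p ≤ q) (hqr : q ≤ r)
    (hlo : (5 : ℚ) / 6 < 1 / p + 1 / q + 1 / r)
    (hhi : (1 : ℚ) / p + 1 / q + 1 / r < 1) :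
    (p = 2 ∧ q = 3 ∧ 7 ≤ r) ∨
    (p = 2 ∧ q = 4 ∧ 5 ≤ r ∧ r ≤ 11) ∨
    (p = 2 ∧ q = 5 ∧ 5 ≤ r ∧ r ≤ 7) ∨
    (p = 3 ∧ q = 3 ∧ 4 ≤ r ∧ r ≤ 5) := by
  have hq2 : 2 ≤ q := le_trans hp hpq
  have hr2 : 2 ≤ r := le_trans hq2 hqr
  have hp3 : p ≤ 3 := by
    by_contra h; push_neg at h
    have h1 : (1:ℚ)/p ≤ 1/4 := aux2 p 4 (by norm_num) h
    have h2 : (1:ℚ)/q ≤ 1/4 := aux2 q 4 (by norm_num) (by omega)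
    have h3 : (1:ℚ)/r ≤ 1/4 := aux2 r 4 (by norm_num) (by omega)
    linarith
  have hq5 : q ≤ 5 := by
    by_contra h; push_neg at h
    have h1 : (1:ℚ)/p ≤ 1/2 := aux2 p 2 (by norm_num) hp
    have h2 : (1:ℚ)/q ≤ 1/6 := aux2 q 6 (by norm_num) h
    have h3 : (1:ℚ)/r ≤ 1/6 := aux2 r 6 (by norm_num) (by omega)
    linarith
  interval_cases p <;> interval_cases q <;> push_cast at hlo hhi
  · -- p=2, q=2
    have : (0:ℚ) < 1/r := by positivity
    linarith
  · -- p=2, q=3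
    left; refine ⟨rfl, rfl, ?_⟩
    have := aux1 r 6 (by omega) (by push_cast; linarith)
    omega
  · -- p=2, q=4
    right; left; refine ⟨rfl, rfl, ?_, ?_⟩
    · have := aux1 r 4 (by omega) (by push_cast; linarith); omega
    · have := aux1 12 r (by norm_num) (by push_cast; linarith); omega
  · -- p=2, q=5
    right; right; left; refine ⟨rfl, rfl, by omega, ?_⟩
    have := aux1 8 r (by norm_num) (by push_cast; linarith); omega
  · -- p=3, q=3
    right; right; right; refine ⟨rfl, rfl, ?_, ?_⟩
    · have := aux1 r 3 (by omega) (by push_cast; linarith); omega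
    · have := aux1 6 r (by norm_num) (by push_cast; linarith); omega
  · -- p=3, q=4
    have := aux1 4 r (by norm_num) (by push_cast; linarith); omega
  · -- p=3, q=5
    have := aux1 4 r (by norm_num) (by push_cast; linarith); omega
end

section
/- Let p ≥ 5 be prime and let V_p be (ℤ/pℤ)² \ {(0,0)} modulo ±1. Declare two vertices [x:y] and [x':y'] of V_p adjacent if xy' - x'y = ±1. Then for any edge between [x:y] and [x':y'], there are exactly two vertices adjacent to both, namely [x+x' : y+y'] and [x-x' : y-y']. -/
/-- Nonzero vectors in `(ℤ/pℤ)²`. -/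
abbrev VS (p : ℕ) := {v : ZMod p × ZMod p // v ≠ 0}

/-- The identification `(x,y) ~ (-x,-y)` on nonzero vectors. -/
def negSetoid (p : ℕ) : Setoid (VS p) where
  r a b := a.1 = b.1 ∨ a.1 = -b.1
  iseqv := by
    refine ⟨fun a => Or.inl rfl, ?_, ?_⟩
    · rintro a b (h | h)
      · exact Or.inl h.symm
      · exact Or.inr (by rw [h, neg_neg])
    · rintro a b c (h | h) (h' | h')
      · exact Or.inl (h.trans h')
      · exact Or.inr (h.trans h')
      · exact Or.inr (by rw [h, h'])
      · exact Or.inl (by rw [h, h', neg_neg])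

/-- `V_p = ((ℤ/pℤ)² \ {0}) / ±`. -/
def Vp (p : ℕ) := Quotient (negSetoid p)

/-- The class `[x:y]` of a nonzero vector. -/
def mkV (p : ℕ) (a : VS p) : Vp p := Quotient.mk (negSetoid p) a

/-- The determinant `x y' - x' y` of a pair of vectors. -/
def detv (p : ℕ) (a b : ZMod p × ZMod p) : ZMod p := a.1 * b.2 - b.1 * a.2

/-- Adjacency on `V_p`: `[x:y] ~ [x':y']` iff `x y' - x' y = ±1`. -/
def Adj (p : ℕ) (u v : Vp p) : Prop :=
  ∃ a b : VS p, mkV p a = u ∧ mkV p b = v ∧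
    (detv p a.1 b.1 = 1 ∨ detv p a.1 b.1 = -1)

lemma detv_neg_left (p : ℕ) (x y : ZMod p × ZMod p) :
    detv p (-x) y = -detv p x y := by
  simp only [detv, Prod.fst_neg, Prod.snd_neg]; ring

lemma detv_neg_right (p : ℕ) (x y : ZMod p × ZMod p) :
    detv p x (-y) = -detv p x y := by
  simp only [detv, Prod.fst_neg, Prod.snd_neg]; ring

lemma pm_neg {K : Type*} [CommRing K] {x : K} (h : -x = 1 ∨ -x = -1) :
    x = 1 ∨ x = -1 := by
  rcases h with h | h
  · exact Or.inr (by linear_combination -h)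
  · exact Or.inl (by linear_combination -h)

lemma cancel2 {p : ℕ} [Fact p.Prime] (h2 : (2 : ZMod p) ≠ 0) {x : ZMod p}
    (h : 2 * x = 0) : x = 0 := by
  rcases mul_eq_zero.mp h with h | h
  · exact absurd h h2
  · exact h

/-- If `[x:y]` and `[x':y']` are adjacent in `V_p` (i.e. `xy'-x'y = ±1`), then
they have exactly two common neighbors, namely `[x+x':y+y']` and
`[x-x':y-y']`, and these are distinct. -/
theorem stmt4 (p : ℕ) (hp : p.Prime) (h5 : 5 ≤ p) (a b : VS p)
    (hab : detv p a.1 b.1 = 1 ∨ detv p a.1 b.1 = -1) :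
    ∃ c d : VS p, c.1 = a.1 + b.1 ∧ d.1 = a.1 - b.1 ∧
      {w : Vp p | Adj p (mkV p a) w ∧ Adj p (mkV p b) w} = {mkV p c, mkV p d} ∧
      mkV p c ≠ mkV p d := by
  haveI := Fact.mk hp
  have h1 : (1 : ZMod p) ≠ 0 := one_ne_zero
  have h2 : (2 : ZMod p) ≠ 0 := by
    have : ((2 : ℕ) : ZMod p) ≠ 0 := by
      rw [Ne, ZMod.natCast_eq_zero_iff]
      intro h
      have := Nat.le_of_dvd (by norm_num) h
      omega
    simpa using this
  have hdne : detv p a.1 b.1 ≠ 0 := by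
    rcases hab with h | h <;> rw [h]
    · exact h1
    · exact neg_ne_zero.mpr h1
  have hc : a.1 + b.1 ≠ 0 := by
    intro h
    apply hdne
    have hb : b.1 = -a.1 := eq_neg_of_add_eq_zero_right h
    rw [hb, detv_neg_right]
    simp only [detv]
    ring
  have hd : a.1 - b.1 ≠ 0 := by
    intro h
    apply hdne
    have hb : a.1 = b.1 := sub_eq_zero.mp h
    rw [hb]
    simp only [detv]
    ring
  refine ⟨⟨a.1 + b.1, hc⟩, ⟨a.1 - b.1, hd⟩, rfl, rfl, ?_, ?_⟩
  · ext w
    simp only [Set.mem_setOf_eq, Set.mem_insert_iff, Set.mem_singleton_iff]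
    constructor
    · rintro ⟨⟨a', w0, ha', hw0, hd1⟩, ⟨b', w1, hb', hw1, hd2⟩⟩
      subst hw0
      have ra : a'.1 = a.1 ∨ a'.1 = -a.1 := Quotient.exact ha'
      have rb : b'.1 = b.1 ∨ b'.1 = -b.1 := Quotient.exact hb'
      have rw1 : w1.1 = w0.1 ∨ w1.1 = -w0.1 := Quotient.exact hw1
      have hδ : detv p a.1 w0.1 = 1 ∨ detv p a.1 w0.1 = -1 := by
        rcases ra with h | h
        · rwa [h] at hd1
        · rw [h, detv_neg_left] at hd1
          exact pm_neg hd1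
      have hγ : detv p b.1 w0.1 = 1 ∨ detv p b.1 w0.1 = -1 := by
        rcases rb with h | h <;> rcases rw1 with h' | h' <;>
          rw [h, h'] at hd2
        · exact hd2
        · rw [detv_neg_right] at hd2
          exact pm_neg hd2
        · rw [detv_neg_left] at hd2
          exact pm_neg hd2
        · rw [detv_neg_left, detv_neg_right, neg_neg] at hd2
          exact hd2
      have he := hab
      simp only [detv] at hδ hγ he
      have key : (w0.1 = a.1 + b.1 ∨ w0.1 = -(a.1 + b.1)) ∨
          (w0.1 = a.1 - b.1 ∨ w0.1 = -(a.1 - b.1)) := by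
        rcases he with h | h <;> rcases hδ with h1 | h1 <;>
          rcases hγ with hg | hg <;>
        [skip; skip; skip; skip; skip; skip; skip; skip] <;>
        first
          | exact Or.inl (Or.inl (Prod.ext
              (by simp only [Prod.fst_add];
                  first
                    | linear_combination b.1.1 * h1 - a.1.1 * hg - w0.1.1 * h
                    | linear_combination -(b.1.1 * h1 - a.1.1 * hg - w0.1.1 * h))
              (by simp only [Prod.snd_add];
                  first
                    | linear_combination b.1.2 * h1 - a.1.2 * hg - w0.1.2 * h
                    | linear_combination -(b.1.2 * h1 - a.1.2 * hg - w0.1.2 * h))))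
          | exact Or.inl (Or.inr (Prod.ext
              (by simp only [Prod.fst_neg, Prod.fst_add];
                  first
                    | linear_combination b.1.1 * h1 - a.1.1 * hg - w0.1.1 * h
                    | linear_combination -(b.1.1 * h1 - a.1.1 * hg - w0.1.1 * h))
              (by simp only [Prod.snd_neg, Prod.snd_add];
                  first
                    | linear_combination b.1.2 * h1 - a.1.2 * hg - w0.1.2 * h
                    | linear_combination -(b.1.2 * h1 - a.1.2 * hg - w0.1.2 * h))))
          | exact Or.inr (Or.inl (Prod.ext
              (by simp only [Prod.fst_sub];
                  first
                    | linear_combination b.1.1 * h1 - a.1.1 * hg - w0.1.1 * h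
                    | linear_combination -(b.1.1 * h1 - a.1.1 * hg - w0.1.1 * h))
              (by simp only [Prod.snd_sub];
                  first
                    | linear_combination b.1.2 * h1 - a.1.2 * hg - w0.1.2 * h
                    | linear_combination -(b.1.2 * h1 - a.1.2 * hg - w0.1.2 * h))))
          | exact Or.inr (Or.inr (Prod.ext
              (by simp only [Prod.fst_neg, Prod.fst_sub];
                  first
                    | linear_combination b.1.1 * h1 - a.1.1 * hg - w0.1.1 * h
                    | linear_combination -(b.1.1 * h1 - a.1.1 * hg - w0.1.1 * h))
              (by simp only [Prod.snd_neg, Prod.snd_sub];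
                  first
                    | linear_combination b.1.2 * h1 - a.1.2 * hg - w0.1.2 * h
                    | linear_combination -(b.1.2 * h1 - a.1.2 * hg - w0.1.2 * h))))
      rcases key with (h | h) | (h | h)
      · exact Or.inl (Quotient.sound (Or.inl h))
      · exact Or.inl (Quotient.sound (Or.inr h))
      · exact Or.inr (Quotient.sound (Or.inl h))
      · exact Or.inr (Quotient.sound (Or.inr h))
    · have eac : detv p a.1 (a.1 + b.1) = detv p a.1 b.1 := by
        simp only [detv, Prod.fst_add, Prod.snd_add]; ring
      have ebc : detv p b.1 (a.1 + b.1) = -detv p a.1 b.1 := by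
        simp only [detv, Prod.fst_add, Prod.snd_add]; ring
      have ead : detv p a.1 (a.1 - b.1) = -detv p a.1 b.1 := by
        simp only [detv, Prod.fst_sub, Prod.snd_sub]; ring
      have ebd : detv p b.1 (a.1 - b.1) = -detv p a.1 b.1 := by
        simp only [detv, Prod.fst_sub, Prod.snd_sub]; ring
      have flip : -detv p a.1 b.1 = 1 ∨ -detv p a.1 b.1 = -1 := by
        rcases hab with h | h
        · exact Or.inr (by rw [h])
        · exact Or.inl (by rw [h, neg_neg])
      rintro (rfl | rfl)
      · exact ⟨⟨a, ⟨a.1 + b.1, hc⟩, rfl, rfl, by rw [eac]; exact hab⟩,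
          ⟨b, ⟨a.1 + b.1, hc⟩, rfl, rfl, by rw [ebc]; exact flip⟩⟩
      · exact ⟨⟨a, ⟨a.1 - b.1, hd⟩, rfl, rfl, by rw [ead]; exact flip⟩,
          ⟨b, ⟨a.1 - b.1, hd⟩, rfl, rfl, by rw [ebd]; exact flip⟩⟩
  · intro h
    rcases Quotient.exact h with h' | h'
    · have e1 := congrArg Prod.fst h'
      have e2 := congrArg Prod.snd h'
      simp only [Prod.fst_add, Prod.fst_sub, Prod.snd_add, Prod.snd_sub] at e1 e2
      exact b.2 (Prod.ext (cancel2 h2 (by linear_combination e1))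
        (cancel2 h2 (by linear_combination e2)))
    · have e1 := congrArg Prod.fst h'
      have e2 := congrArg Prod.snd h'
      simp only [Prod.fst_add, Prod.fst_sub, Prod.snd_add, Prod.snd_sub,
        Prod.fst_neg, Prod.snd_neg] at e1 e2
      exact a.2 (Prod.ext (cancel2 h2 (by linear_combination e1))
        (cancel2 h2 (by linear_combination e2)))
end

section
/- Let p ≥ 5 be prime, let s ∈ {1,...,p-1}, and let s* be the inverse of s modulo p. The p neighbors of [s:0] in V_p are [js : s*] for j = 0,1,...,p-1, and the action of C̄_p = [[1,1],[0,1]] on these neighbors satisfies C̄_p([js : s*]) = [(j + (s*)²)s : s*]; in particular C̄_p acts on the neighbors of [s:0] as a cyclic permutation of order p. -/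
/-- Action of a matrix on a vector. -/
def actv (p : ℕ) (S : Matrix.SpecialLinearGroup (Fin 2) (ZMod p))
    (v : ZMod p × ZMod p) : ZMod p × ZMod p :=
  (S.1 0 0 * v.1 + S.1 0 1 * v.2, S.1 1 0 * v.1 + S.1 1 1 * v.2)

theorem actv_ne (p : ℕ) (S : Matrix.SpecialLinearGroup (Fin 2) (ZMod p))
    (v : VS p) : actv p S v.1 ≠ 0 := by
  intro h
  have hdet : S.1 0 0 * S.1 1 1 - S.1 0 1 * S.1 1 0 = 1 := by
    have h2 := S.2; rwa [Matrix.det_fin_two] at h2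
  have h1 := congrArg Prod.fst h
  have h2' := congrArg Prod.snd h
  simp only [actv, Prod.fst_zero, Prod.snd_zero] at h1 h2'
  apply v.2
  have hx : v.1.1 = 0 := by
    linear_combination S.1 1 1 * h1 - S.1 0 1 * h2' - v.1.1 * hdet
  have hy : v.1.2 = 0 := by
    linear_combination S.1 0 0 * h2' - S.1 1 0 * h1 - v.1.2 * hdet
  rw [Prod.ext_iff]
  exact ⟨by simpa using hx, by simpa using hy⟩

/-- Action of `SL(2, ℤ/pℤ)` on nonzero vectors. -/
def actV (p : ℕ) (S : Matrix.SpecialLinearGroup (Fin 2) (ZMod p)) (v : VS p) :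
    VS p := ⟨actv p S v.1, actv_ne p S v⟩

/-- Induced action of `SL(2, ℤ/pℤ)` on `V_p`. -/
def actQ (p : ℕ) (S : Matrix.SpecialLinearGroup (Fin 2) (ZMod p)) :
    Vp p → Vp p :=
  Quotient.map (actV p S) (by
    rintro a b (h | h)
    · exact Or.inl (by show actv p S a.1 = actv p S b.1; rw [h])
    · refine Or.inr ?_
      show actv p S a.1 = -(actv p S b.1)
      rw [h, Prod.ext_iff]
      constructor <;> simp [actv] <;> ring)

/-- The element `C = [[1,1],[0,1]]` of `SL(2, ℤ/pℤ)`. -/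
def Cmat (p : ℕ) : Matrix.SpecialLinearGroup (Fin 2) (ZMod p) :=
  ⟨!![1, 1; 0, 1], by norm_num [Matrix.det_fin_two_of]⟩

lemma mkV_eq_iff {p : ℕ} (a b : VS p) :
    mkV p a = mkV p b ↔ (a.1 = b.1 ∨ a.1 = -b.1) := by
  constructor
  · intro h
    exact Quotient.exact h
  · intro h
    exact Quotient.sound h

lemma actv_C {p : ℕ} (v : ZMod p × ZMod p) :
    actv p (Cmat p) v = (v.1 + v.2, v.2) := by
  simp [actv, Cmat, Matrix.cons_val_zero, Matrix.cons_val_one, Matrix.head_cons]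

lemma actQ_mk {p : ℕ} (S : Matrix.SpecialLinearGroup (Fin 2) (ZMod p)) (b : VS p) :
    actQ p S (mkV p b) = mkV p (actV p S b) := rfl

/-- For a prime `p ≥ 5` and `s ≠ 0` in `ℤ/pℤ` with inverse `s* = s⁻¹`:
the neighbors of `[s:0]` in `V_p` are exactly the classes `[j·s : s*]` for
`j ∈ ℤ/pℤ`; these `p` classes are pairwise distinct; the action of
`C̄_p = [[1,1],[0,1]]` satisfies `C̄_p [j·s : s*] = [(j+(s*)²)·s : s*]`; and
`C̄_p` permutes the neighbors of `[s:0]` cyclically with order `p`. -/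
theorem stmt8 (p : ℕ) (hp : p.Prime) (h5 : 5 ≤ p) (s : ZMod p) (hs : s ≠ 0)
    (a : VS p) (ha : a.1 = (s, 0)) :
    ({w : Vp p | Adj p (mkV p a) w} =
        {w : Vp p | ∃ (j : ZMod p) (b : VS p), b.1 = (j * s, s⁻¹) ∧ mkV p b = w}) ∧
      (∀ (j j' : ZMod p) (b b' : VS p), b.1 = (j * s, s⁻¹) →
        b'.1 = (j' * s, s⁻¹) → (mkV p b = mkV p b' ↔ j = j')) ∧
      (∀ (j : ZMod p) (b c : VS p), b.1 = (j * s, s⁻¹) →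
        c.1 = ((j + s⁻¹ ^ 2) * s, s⁻¹) →
        actQ p (Cmat p) (mkV p b) = mkV p c) ∧
      (∀ w : Vp p, Adj p (mkV p a) w →
        (actQ p (Cmat p))^[p] w = w ∧
        ∀ k : ℕ, 0 < k → k < p → (actQ p (Cmat p))^[k] w ≠ w) := by
  haveI : Fact p.Prime := ⟨hp⟩
  have hsi : s⁻¹ ≠ 0 := inv_ne_zero hs
  have hss : s * s⁻¹ = 1 := mul_inv_cancel₀ hs
  have h2 : (2 : ZMod p) ≠ 0 := by
    have h2' : ((2 : ℕ) : ZMod p) ≠ 0 := by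
      rw [Ne, ZMod.natCast_eq_zero_iff]
      intro h
      have := Nat.le_of_dvd (by norm_num) h
      omega
    exact_mod_cast h2'
  -- key: classes with second coordinate s⁻¹ are distinguished by j
  have key : ∀ (j j' : ZMod p) (b b' : VS p), b.1 = (j * s, s⁻¹) →
      b'.1 = (j' * s, s⁻¹) → (mkV p b = mkV p b' ↔ j = j') := by
    intro j j' b b' hb hb'
    rw [mkV_eq_iff, hb, hb']
    constructor
    · rintro (h | h)
      · have h1 := congrArg Prod.fst h
        simp only at h1
        exact mul_right_cancel₀ hs h1
      · have h2' := congrArg Prod.snd h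
        simp only [Prod.snd_neg] at h2'
        exfalso
        apply hsi
        have : (2 : ZMod p) * s⁻¹ = 0 := by linear_combination h2'
        rcases mul_eq_zero.mp this with h | h
        · exact absurd h h2
        · exact h
    · rintro rfl; exact Or.inl rfl
  refine ⟨?_, key, ?_, ?_⟩
  · -- neighbors of [s:0]
    ext w
    simp only [Set.mem_setOf_eq]
    constructor
    · rintro ⟨a', b', haa, hbw, hdet⟩
      have ha' : a'.1 = (s, 0) ∨ a'.1 = (-s, 0) := by
        rcases (mkV_eq_iff a' a).mp haa with h | h
        · exact Or.inl (h.trans ha)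
        · right; rw [h, ha]; simp
      have hy : s * b'.1.2 = 1 ∨ s * b'.1.2 = -1 := by
        rcases ha' with h | h <;> rcases hdet with hd | hd <;>
          simp only [detv, h] at hd
        · left; linear_combination hd
        · right; linear_combination hd
        · right; linear_combination -hd
        · left; linear_combination -hd
      rcases hy with hy | hy
      · have hy' : b'.1.2 = s⁻¹ := mul_left_cancel₀ hs (hy.trans hss.symm)
        refine ⟨b'.1.1 * s⁻¹, b', ?_, hbw⟩
        rw [Prod.ext_iff]
        refine ⟨?_, hy'⟩
        show b'.1.1 = b'.1.1 * s⁻¹ * s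
        rw [mul_assoc, inv_mul_cancel₀ hs, mul_one]
      · have hy' : b'.1.2 = -s⁻¹ := by
          apply mul_left_cancel₀ hs
          rw [hy, mul_neg, hss]
        have hnz : -b'.1 ≠ 0 := fun h => b'.2 (by simpa using congrArg Neg.neg h)
        refine ⟨-b'.1.1 * s⁻¹, ⟨-b'.1, hnz⟩, ?_, ?_⟩
        · rw [Prod.ext_iff]
          constructor
          · show -b'.1.1 = -b'.1.1 * s⁻¹ * s
            rw [mul_assoc, inv_mul_cancel₀ hs, mul_one]
          · show -b'.1.2 = s⁻¹
            rw [hy', neg_neg]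
        · rw [← hbw]
          exact Quotient.sound (Or.inr rfl)
    · rintro ⟨j, b, hb, rfl⟩
      refine ⟨a, b, rfl, rfl, Or.inl ?_⟩
      simp only [detv, ha, hb]
      simp [hss]
  · -- action of C
    intro j b c hb hc
    rw [actQ_mk, mkV_eq_iff]
    left
    show actv p (Cmat p) b.1 = c.1
    rw [hb, actv_C, hc, Prod.ext_iff]
    constructor
    · show j * s + s⁻¹ = (j + s⁻¹ ^ 2) * s
      linear_combination (-s⁻¹) * hss
    · rfl
  · -- cyclic of order p
    intro w hw
    have hmem : ∃ (j : ZMod p) (b : VS p), b.1 = (j * s, s⁻¹) ∧ mkV p b = w := by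
      rcases hw with ⟨a', b', haa, hbw, hdet⟩
      -- reuse part 1: w is in the neighbor set; redo quickly via the set equality
      have ha' : a'.1 = (s, 0) ∨ a'.1 = (-s, 0) := by
        rcases (mkV_eq_iff a' a).mp haa with h | h
        · exact Or.inl (h.trans ha)
        · right; rw [h, ha]; simp
      have hy : s * b'.1.2 = 1 ∨ s * b'.1.2 = -1 := by
        rcases ha' with h | h <;> rcases hdet with hd | hd <;>
          simp only [detv, h] at hd
        · left; linear_combination hd
        · right; linear_combination hd
        · right; linear_combination -hd
        · left; linear_combination -hd
      rcases hy with hy | hy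
      · have hy' : b'.1.2 = s⁻¹ := mul_left_cancel₀ hs (hy.trans hss.symm)
        refine ⟨b'.1.1 * s⁻¹, b', ?_, hbw⟩
        rw [Prod.ext_iff]
        refine ⟨?_, hy'⟩
        show b'.1.1 = b'.1.1 * s⁻¹ * s
        rw [mul_assoc, inv_mul_cancel₀ hs, mul_one]
      · have hy' : b'.1.2 = -s⁻¹ := by
          apply mul_left_cancel₀ hs
          rw [hy, mul_neg, hss]
        have hnz : -b'.1 ≠ 0 := fun h => b'.2 (by simpa using congrArg Neg.neg h)
        refine ⟨-b'.1.1 * s⁻¹, ⟨-b'.1, hnz⟩, ?_, ?_⟩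
        · rw [Prod.ext_iff]
          constructor
          · show -b'.1.1 = -b'.1.1 * s⁻¹ * s
            rw [mul_assoc, inv_mul_cancel₀ hs, mul_one]
          · show -b'.1.2 = s⁻¹
            rw [hy', neg_neg]
        · rw [← hbw]
          exact Quotient.sound (Or.inr rfl)
    obtain ⟨j, b, hb, rfl⟩ := hmem
    -- the k-th iterate
    have hiter : ∀ k : ℕ, (actQ p (Cmat p))^[k] (mkV p b) =
        mkV p ⟨((j + (k : ZMod p) * s⁻¹ ^ 2) * s, s⁻¹),
          fun h => hsi (congrArg Prod.snd h)⟩ := by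
      intro k
      induction k with
      | zero =>
        simp only [Function.iterate_zero, id_eq]
        apply Quotient.sound
        left
        rw [hb]
        norm_num
      | succ k ih =>
        rw [Function.iterate_succ_apply', ih, actQ_mk]
        apply Quotient.sound
        left
        show actv p (Cmat p) _ = _
        rw [actv_C, Prod.ext_iff]
        constructor
        · show (j + (k : ZMod p) * s⁻¹ ^ 2) * s + s⁻¹ =
            (j + ((k + 1 : ℕ) : ZMod p) * s⁻¹ ^ 2) * s
          push_cast
          linear_combination (-s⁻¹) * hss
        · rfl
    have hsi2 : s⁻¹ ^ 2 ≠ 0 := pow_ne_zero _ hsi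
    have heq : ∀ k : ℕ, ((actQ p (Cmat p))^[k] (mkV p b) = mkV p b ↔ (p : ℕ) ∣ k) := by
      intro k
      rw [hiter k, key (j + (k : ZMod p) * s⁻¹ ^ 2) j _ b rfl hb]
      constructor
      · intro h
        have : (k : ZMod p) * s⁻¹ ^ 2 = 0 := by linear_combination h
        rcases mul_eq_zero.mp this with h' | h'
        · exact (ZMod.natCast_eq_zero_iff k p).mp h'
        · exact absurd h' hsi2
      · intro h
        have : (k : ZMod p) = 0 := (ZMod.natCast_eq_zero_iff k p).mpr h
        rw [this]; ring
    refine ⟨(heq p).mpr dvd_rfl, fun k hk hkp h => ?_⟩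
    have := (heq k).mp h
    have := Nat.le_of_dvd hk this
    omega
end

section
/- Let p ≥ 5 be prime and define A_{i,j} = (1/p) Σ_{s=1}^{p-1} ω^{k_s} ε^{i s* + s j} for 0 ≤ i,j ≤ p-1, where ε = e^{2πi/p}, ω = e^{4πi/(p-1)}, s* is the inverse of s mod p, and k_s is the discrete log of s. Then for i ≠ 0 and any j, A_{i,j} = ω^{k_i} A_{1,n} where n ≡ ij (mod p), 0 ≤ n ≤ p-1; moreover A_{i,0} = A_{p-i,0} and A_{i,j} = A_{p-i,p-j} for i,j ≠ 0. -/
open Finset Complex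

/-!
Since `k` is a discrete logarithm and `ω ^ (p - 1) = 1`, the map `s ↦ ω ^ k_s` is
multiplicative mod `p`. Substituting `s ↦ i* s (mod p)` in the sum defining `A_{i,j}` therefore
pulls out the factor `ω ^ k_i` and leaves `A_{1,ij}`. Substituting `s ↦ -s` gives the two
reflection identities: `r ^ ((p - 1) / 2) = -1` and `ω ^ ((p - 1) / 2) = 1`, so
`ω ^ k_{p-s} = ω ^ k_s`, while `(-s)* = -s*` flips the signs of `i` and `j` in the exponent
of `ε`.
-/

/-- The matrix entries `A_{i,j} = (1/p) Σ_{s=1}^{p-1} ω^{k_s} ε^{i s* + s j}`,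
where `ω = e^{4πi/(p-1)}`, `ε = e^{2πi/p}`, `s*` is the inverse of `s` mod `p`
and `k_s` the discrete log of `s` base a primitive root `r`. -/
noncomputable def Amat (p : ℕ) (kf st : ℕ → ℕ) (i j : ℕ) : ℂ :=
  (1 / p) * ∑ s ∈ Icc 1 (p - 1),
    Complex.exp (4 * Real.pi * I / ((p : ℂ) - 1)) ^ (kf s) *
      Complex.exp (2 * Real.pi * I / (p : ℂ)) ^ (i * st s + s * j)

lemma exp_four_pi_mul_I_div_pow_half {p : ℕ} (hp : Odd p) :
    Complex.exp (4 * Real.pi * I / ((p : ℂ) - 1)) ^ ((p - 1) / 2) = 1 := by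
  obtain ⟨q, rfl⟩ := hp
  rcases eq_or_ne q 0 with rfl | hq
  · simp
  rw [show (2 * q + 1 - 1) / 2 = q by omega, ← Complex.exp_nat_mul]
  convert Complex.exp_two_pi_mul_I using 2
  push_cast
  field_simp
  ring

lemma exp_four_pi_mul_I_div_pow_sub_one {p : ℕ} (hp : Odd p) :
    Complex.exp (4 * Real.pi * I / ((p : ℂ) - 1)) ^ (p - 1) = 1 := by
  rw [← Nat.div_two_mul_two_of_even (Nat.Odd.sub_odd hp odd_one), pow_mul,
    exp_four_pi_mul_I_div_pow_half hp, one_pow]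

lemma pow_div_two_eq_neg_one {R : Type*} [CommRing R] [NoZeroDivisors R] {x : R} {n : ℕ}
    (hx : orderOf x = n) (hn : Even n) (hn0 : n ≠ 0) : x ^ (n / 2) = -1 := by
  have h2 : 2 ∣ n := hn.two_dvd
  refine IsPrimitiveRoot.eq_neg_one_of_two_right ?_
  convert (IsPrimitiveRoot.iff_orderOf.mpr hx).pow_of_dvd (by omega) (Nat.div_dvd_of_dvd h2)
  exact (Nat.div_div_self h2 hn0).symm

lemma pow_eq_pow_of_natCast_eq {M : Type*} [Monoid M] {ζ : M} {n a b : ℕ} (hζ : ζ ^ n = 1)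
    (h : (a : ZMod n) = b) : ζ ^ a = ζ ^ b :=
  pow_eq_pow_of_modEq ((ZMod.natCast_eq_natCast_iff a b n).mp h) hζ

namespace ZMod

section

variable {p : ℕ}

lemma eq_of_natCast_eq {a b : ℕ} (ha : a < p) (hb : b < p) (h : (a : ZMod p) = b) : a = b := by
  rw [← ZMod.val_cast_of_lt ha, ← ZMod.val_cast_of_lt hb, h]

lemma natCast_sub_self {a : ℕ} (ha : a ≤ p) : ((p - a : ℕ) : ZMod p) = -a := by
  simp [Nat.cast_sub ha]

end

variable {p : ℕ} [Fact p.Prime]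

lemma mem_Icc_one_sub_one_iff {s : ℕ} : s ∈ Icc 1 (p - 1) ↔ s < p ∧ (s : ZMod p) ≠ 0 := by
  have := (Fact.out : p.Prime).two_le
  rw [mem_Icc, Ne, ZMod.natCast_eq_zero_iff]
  constructor
  · rintro ⟨h1, h2⟩
    exact ⟨by omega, fun h => absurd (Nat.le_of_dvd h1 h) (by omega)⟩
  · rintro ⟨h1, h2⟩
    exact ⟨Nat.pos_of_ne_zero fun h => h2 (h ▸ dvd_zero p), by omega⟩

lemma natCast_mul_mod_mem_Icc {a s : ℕ} (ha : (a : ZMod p) ≠ 0) (hs : s ∈ Icc 1 (p - 1)) :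
    a * s % p ∈ Icc 1 (p - 1) := by
  rw [mem_Icc_one_sub_one_iff] at hs ⊢
  refine ⟨Nat.mod_lt _ (Fact.out : p.Prime).pos, ?_⟩
  simpa [ZMod.natCast_mod] using mul_ne_zero ha hs.2

lemma sum_Icc_comp_mul_mod {M : Type*} [AddCommMonoid M] {a : ℕ} (ha : (a : ZMod p) ≠ 0)
    (f : ℕ → M) : ∑ s ∈ Icc 1 (p - 1), f (a * s % p) = ∑ s ∈ Icc 1 (p - 1), f s := by
  set b := ((a : ZMod p)⁻¹).val
  have hb : (b : ZMod p) ≠ 0 := by simpa [b] using ha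
  have hinv : ∀ c d : ℕ, (c : ZMod p) * d = 1 →
      ∀ s ∈ Icc 1 (p - 1), c * (d * s % p) % p = s := fun c d hcd s hs => by
      rw [mem_Icc_one_sub_one_iff] at hs
      refine eq_of_natCast_eq (Nat.mod_lt _ (Fact.out : p.Prime).pos) hs.1 ?_
      push_cast [ZMod.natCast_mod]
      rw [← mul_assoc, hcd, one_mul]
  refine sum_nbij' (fun s => a * s % p) (fun t => b * t % p) (fun s hs => ?_) (fun t ht => ?_)
    (hinv b a (by simp [b, ha])) (hinv a b (by simp [b, ha])) (fun _ _ => rfl)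
  · exact natCast_mul_mod_mem_Icc ha hs
  · exact natCast_mul_mod_mem_Icc hb ht

end ZMod

section Amat

variable {p r : ℕ} [Fact p.Prime] {kf st : ℕ → ℕ}
  (hr : orderOf (r : ZMod p) = p - 1)
  (hk : ∀ s ∈ Icc 1 (p - 1), (r : ZMod p) ^ kf s = s)

include hr hk in
lemma pow_kf_eq_pow_mul {M : Type*} [Monoid M] {ζ : M} (hζ : ζ ^ (p - 1) = 1) {e b c : ℕ}
    (hb : b ∈ Icc 1 (p - 1)) (hc : c ∈ Icc 1 (p - 1)) (h : (c : ZMod p) = r ^ e * b) :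
    ζ ^ kf c = ζ ^ e * ζ ^ kf b := by
  have hfin : IsOfFinOrder (r : ZMod p) :=
    orderOf_pos_iff.mp (hr ▸ Nat.sub_pos_of_lt (Fact.out : p.Prime).one_lt)
  rw [← pow_add]
  refine pow_eq_pow_of_modEq (hfin.pow_eq_pow_iff_modEq.mp ?_) (hr ▸ hζ)
  rw [pow_add, hk c hc, hk b hb, h]

variable (hst : ∀ s ∈ Icc 1 (p - 1), (st s : ZMod p) = (s : ZMod p)⁻¹)

include hr hk hst in
lemma Amat_eq_mul_Amat_one (hp : Odd p) {i j n : ℕ} (hi : i ∈ Icc 1 (p - 1))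
    (hn : (n : ZMod p) = i * j) :
    Amat p kf st i j =
      Complex.exp (4 * Real.pi * I / ((p : ℂ) - 1)) ^ kf i * Amat p kf st 1 n := by
  simp only [Amat]
  set ω := Complex.exp (4 * Real.pi * I / ((p : ℂ) - 1))
  set ε := Complex.exp (2 * Real.pi * I / (p : ℂ))
  have hω : ω ^ (p - 1) = 1 := exp_four_pi_mul_I_div_pow_sub_one hp
  have hε : ε ^ p = 1 := (Complex.isPrimitiveRoot_exp p (Fact.out : p.Prime).ne_zero).pow_eq_one
  have hi0 := (ZMod.mem_Icc_one_sub_one_iff.mp hi).2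
  have hsti : (st i : ZMod p) ≠ 0 := by simpa [hst i hi] using hi0
  rw [mul_left_comm _ (1 / (p : ℂ))]
  congr 1
  rw [mul_sum]
  refine (sum_congr rfl fun s hs => ?_).trans (ZMod.sum_Icc_comp_mul_mod hsti _)
  have hs0 := (ZMod.mem_Icc_one_sub_one_iff.mp hs).2
  have ht := ZMod.natCast_mul_mod_mem_Icc hsti hs
  set t := st i * s % p
  have htcast : (t : ZMod p) = (i : ZMod p)⁻¹ * s := by
    simp [t, ZMod.natCast_mod, hst i hi]
  rw [← mul_assoc, ← pow_kf_eq_pow_mul hr hk hω ht hs (by rw [hk i hi, htcast]; field_simp)]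
  congr 1
  refine pow_eq_pow_of_natCast_eq hε ?_
  push_cast
  rw [hst s hs, hst t ht, htcast, hn]
  field_simp

include hr hk hst in
lemma Amat_eq_Amat_sub (hp : Odd p) {i j j' : ℕ} (hi : i ∈ Icc 1 (p - 1))
    (hj : (j' : ZMod p) = -j) :
    Amat p kf st i j = Amat p kf st (p - i) j' := by
  simp only [Amat]
  set ω := Complex.exp (4 * Real.pi * I / ((p : ℂ) - 1))
  set ε := Complex.exp (2 * Real.pi * I / (p : ℂ))
  have hωq : ω ^ ((p - 1) / 2) = 1 := exp_four_pi_mul_I_div_pow_half hp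
  have hω : ω ^ (p - 1) = 1 := exp_four_pi_mul_I_div_pow_sub_one hp
  have hε : ε ^ p = 1 := (Complex.isPrimitiveRoot_exp p (Fact.out : p.Prime).ne_zero).pow_eq_one
  have hrq : (r : ZMod p) ^ ((p - 1) / 2) = -1 :=
    pow_div_two_eq_neg_one hr (Nat.Odd.sub_odd hp odd_one)
      (Nat.sub_ne_zero_of_lt (Fact.out : p.Prime).one_lt)
  have hp1 : ((p - 1 : ℕ) : ZMod p) ≠ 0 := by
    rw [ZMod.natCast_sub_self (Fact.out : p.Prime).one_le]
    simp
  congr 1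
  refine (sum_congr rfl fun s hs => ?_).trans (ZMod.sum_Icc_comp_mul_mod hp1 _)
  have ht := ZMod.natCast_mul_mod_mem_Icc hp1 hs
  set t := (p - 1) * s % p
  have htcast : (t : ZMod p) = -s := by
    simp [t, ZMod.natCast_mod, ZMod.natCast_sub_self (Fact.out : p.Prime).one_le]
  rw [pow_kf_eq_pow_mul hr hk hω hs ht (by rw [hrq, htcast, neg_one_mul]), hωq, one_mul]
  congr 1
  refine pow_eq_pow_of_natCast_eq hε ?_
  push_cast
  rw [hst s hs, hst t ht, htcast, hj,
    ZMod.natCast_sub_self ((mem_Icc.mp hi).2.trans (Nat.sub_le p 1))]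
  ring

end Amat

/-- Symmetries of the entries `A_{i,j}`: for `i ≠ 0`,
`A_{i,j} = ω^{k_i} A_{1,n}` where `n ≡ ij (mod p)`, `0 ≤ n ≤ p-1`;
moreover `A_{i,0} = A_{p-i,0}` and `A_{i,j} = A_{p-i,p-j}` for `i, j ≠ 0`. -/
theorem stmt13 (p r : ℕ) (hp : p.Prime) (h5 : 5 ≤ p)
    (hr : orderOf (r : ZMod p) = p - 1) (kf st : ℕ → ℕ)
    (hk : ∀ s ∈ Icc 1 (p - 1), kf s ∈ Icc 1 (p - 1) ∧ r ^ (kf s) ≡ s [MOD p])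
    (hst : ∀ s ∈ Icc 1 (p - 1), st s ∈ Icc 1 (p - 1) ∧ s * st s ≡ 1 [MOD p]) :
    (∀ i ∈ Icc 1 (p - 1), ∀ j ≤ p - 1, ∀ n, n = i * j % p →
      Amat p kf st i j =
        Complex.exp (4 * Real.pi * I / ((p : ℂ) - 1)) ^ (kf i) *
          Amat p kf st 1 n) ∧
    (∀ i ∈ Icc 1 (p - 1), Amat p kf st i 0 = Amat p kf st (p - i) 0) ∧
    (∀ i ∈ Icc 1 (p - 1), ∀ j ∈ Icc 1 (p - 1),
      Amat p kf st i j = Amat p kf st (p - i) (p - j)) := by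
  have := Fact.mk hp
  have hodd : Odd p := hp.odd_of_ne_two (by omega)
  have hlog : ∀ s ∈ Icc 1 (p - 1), (r : ZMod p) ^ kf s = s := fun s hs => by
    exact_mod_cast (ZMod.natCast_eq_natCast_iff _ _ _).mpr (hk s hs).2
  have hinv : ∀ s ∈ Icc 1 (p - 1), (st s : ZMod p) = (s : ZMod p)⁻¹ := fun s hs =>
    eq_inv_of_mul_eq_one_right <| by
      exact_mod_cast (ZMod.natCast_eq_natCast_iff _ _ _).mpr (hst s hs).2
  refine ⟨fun i hi j _ n hn => ?_, fun i hi => ?_, fun i hi j hj => ?_⟩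
  · exact Amat_eq_mul_Amat_one hr hlog hinv hodd hi (by simp [hn, ZMod.natCast_mod])
  · exact Amat_eq_Amat_sub hr hlog hinv hodd hi (by simp)
  · exact Amat_eq_Amat_sub hr hlog hinv hodd hi
      (ZMod.natCast_sub_self ((mem_Icc.mp hj).2.trans (Nat.sub_le p 1)))
end
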